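/- Suppose θ: s → ℝ assigns logit-scale propensities to units of a finite set s of size m+1, with |θ_i − θ_j| < δ for all i,j ∈ s. For i ∈ s, let π(i) = exp(θ_i) / Σ_{j∈s} exp(θ_j). Then |π(i)/(1/|s|) − 1| ≤ (1 − 1/|s|)(e^{2δ} − 1). -/

import Mathlib

lemma abs_exp_sub_one_le (x : ℝ) : |Real.exp x - 1| ≤ Real.exp |x| - 1 := by
  rw [abs_le]
  constructor
  · have h1 : x + 1 ≤ Real.exp x := Real.add_one_le_exp x
    have h2 : -x + 1 ≤ Real.exp (-x) := Real.add_one_le_exp (-x)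
    rcases abs_cases x with ⟨h, _⟩ | ⟨h, _⟩
    · rw [h]; linarith
    · rw [h]; nlinarith [Real.exp_pos x, Real.exp_pos (-x), Real.exp_neg x,
        mul_pos (Real.exp_pos x) (Real.exp_pos (-x))]
  · have := Real.exp_le_exp.2 (le_abs_self x); linarith

lemma key_bound (δ a b c : ℝ) (hδ : 0 < δ) (hab : |a - b| < δ) (hbc : |b - c| < δ) :
    |Real.exp a - Real.exp b| ≤ (Real.exp (2 * δ) - 1) * Real.exp c := by
  have h1 : |Real.exp a - Real.exp b| ≤ (Real.exp δ - 1) * Real.exp b := by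
    have : Real.exp a - Real.exp b = (Real.exp (a - b) - 1) * Real.exp b := by
      rw [Real.exp_sub]; field_simp
    rw [this, abs_mul, abs_of_pos (Real.exp_pos b)]
    gcongr
    calc |Real.exp (a - b) - 1| ≤ Real.exp |a - b| - 1 := abs_exp_sub_one_le _
      _ ≤ Real.exp δ - 1 := by
          have := Real.exp_le_exp.2 hab.le; linarith
  have h2 : Real.exp b ≤ Real.exp δ * Real.exp c := by
    rw [← Real.exp_add]
    apply Real.exp_le_exp.2
    have := (abs_lt.1 hbc).2
    linarith
  calc |Real.exp a - Real.exp b| ≤ (Real.exp δ - 1) * (Real.exp δ * Real.exp c) := by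
        refine h1.trans ?_
        have h3 : (0:ℝ) ≤ Real.exp δ - 1 := by
          have := Real.one_le_exp hδ.le; linarith
        exact mul_le_mul_of_nonneg_left h2 h3
    _ ≤ (Real.exp (2 * δ) - 1) * Real.exp c := by
        have : (Real.exp δ - 1) * Real.exp δ = Real.exp (2 * δ) - Real.exp δ := by
          rw [two_mul, Real.exp_add]; ring
        have := Real.one_le_exp hδ.le
        nlinarith [Real.exp_pos c]

/-- If the logit propensities `θ` on a finite nonempty set satisfy `|θ_i − θ_j| < δ`,
then the conditional-logistic allocation probabilities
`π(i) = exp(θ_i)/Σ_j exp(θ_j)` satisfy `|π(i)/(1/|s|) − 1| ≤ (1 − 1/|s|)(e^{2δ} − 1)`. -/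
theorem stmt_16 {ι : Type*} [Fintype ι] [Nonempty ι] (δ : ℝ) (hδ : 0 < δ)
    (θ : ι → ℝ) (hθ : ∀ i j, |θ i - θ j| < δ) (i : ι) :
    |(Real.exp (θ i) / ∑ j, Real.exp (θ j)) / ((Fintype.card ι : ℝ))⁻¹ - 1| ≤
      (1 - ((Fintype.card ι : ℝ))⁻¹) * (Real.exp (2 * δ) - 1) := by
  classical
  set n : ℕ := Fintype.card ι with hn
  have hn0 : 0 < n := Fintype.card_pos
  have hnR : (0:ℝ) < (n:ℝ) := Nat.cast_pos.2 hn0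
  set S : ℝ := ∑ j, Real.exp (θ j) with hS
  have hSpos : 0 < S := Finset.sum_pos (fun j _ => Real.exp_pos _) Finset.univ_nonempty
  have hrw : (Real.exp (θ i) / S) / ((n:ℝ))⁻¹ - 1 =
      (∑ j, (Real.exp (θ i) - Real.exp (θ j))) / S := by
    rw [Finset.sum_sub_distrib, Finset.sum_const, Finset.card_univ, ← hn, ← hS]
    field_simp
    ring
  rw [hrw]
  have hbound : |∑ j, (Real.exp (θ i) - Real.exp (θ j))| ≤
      ((n:ℝ) - 1) * ((Real.exp (2 * δ) - 1) * (S / n)) := by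
    calc |∑ j, (Real.exp (θ i) - Real.exp (θ j))|
        = |∑ j ∈ Finset.univ.erase i, (Real.exp (θ i) - Real.exp (θ j))| := by
          rw [← Finset.add_sum_erase _ _ (Finset.mem_univ i), sub_self, zero_add]
      _ ≤ ∑ j ∈ Finset.univ.erase i, |Real.exp (θ i) - Real.exp (θ j)| :=
          Finset.abs_sum_le_sum_abs _ _
      _ ≤ ∑ _j ∈ Finset.univ.erase i, ((Real.exp (2 * δ) - 1) * (S / n)) := by
          apply Finset.sum_le_sum
          intro j _
          -- pointwise: |exp θi - exp θj| ≤ (e^{2δ}-1) exp θk for each k, so ≤ (..)·S/n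
          have hptk : ∀ k, |Real.exp (θ i) - Real.exp (θ j)| ≤
              (Real.exp (2 * δ) - 1) * Real.exp (θ k) := fun k =>
            key_bound δ (θ i) (θ j) (θ k) hδ (hθ i j) (hθ j k)
          have hsum : (n:ℝ) * |Real.exp (θ i) - Real.exp (θ j)| ≤
              (Real.exp (2 * δ) - 1) * S := by
            have : ∑ k : ι, |Real.exp (θ i) - Real.exp (θ j)| ≤
                ∑ k : ι, (Real.exp (2 * δ) - 1) * Real.exp (θ k) :=
              Finset.sum_le_sum fun k _ => hptk k
            simpa [Finset.sum_const, Finset.card_univ, ← hn, ← hS, ← Finset.mul_sum,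
              nsmul_eq_mul] using this
          calc |Real.exp (θ i) - Real.exp (θ j)|
              = (n:ℝ) * |Real.exp (θ i) - Real.exp (θ j)| / n := by field_simp
            _ ≤ (Real.exp (2 * δ) - 1) * S / n := by gcongr
            _ = (Real.exp (2 * δ) - 1) * (S / n) := by ring
      _ = ((n:ℝ) - 1) * ((Real.exp (2 * δ) - 1) * (S / n)) := by
          rw [Finset.sum_const, Finset.card_erase_of_mem (Finset.mem_univ i),
            Finset.card_univ, ← hn, nsmul_eq_mul]
          congr 1
          rw [Nat.cast_sub hn0, Nat.cast_one]
  rw [abs_div, abs_of_pos hSpos, div_le_iff₀ hSpos]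
  calc |∑ j, (Real.exp (θ i) - Real.exp (θ j))|
      ≤ ((n:ℝ) - 1) * ((Real.exp (2 * δ) - 1) * (S / n)) := hbound
    _ = (1 - ((n:ℝ))⁻¹) * (Real.exp (2 * δ) - 1) * S := by field_simp
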